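/- Lemma 4 (Conditions (iii) and (iv) imply Condition (i) at an optimum of CP1). Let (ā*, d̄*, ē*, f̄*, u*, q*) be an optimal solution of problem CP1 such that, for every i∈I with ā*_i>0, Condition (iii) at zone i and Condition (iv) at zone i both hold. Then for every i∈I and every 1≤k≤K_i, Σ_{k'=1}^{k} q*_{ik'} = 1 − exp(−ω δ_k² ā*_i/σ_i); that is, Condition (i) holds at (ā*, d̄*, ē*, f̄*, u*, q*). -/

import Mathlib

/-!
If (C1) were slack at a level `k` of a zone with `ā_i > 0`, one could move a little of `q` from
level `k + 1` to level `k` (when `k = K_i`, just raise `q_{iK_i}`) in either direction without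
leaving the feasible set, provided `u` is re-adjusted so that each (C2) keeps its distance to the
boundary of the exponential cone. The objective then changes at first order by
`ε (M_k - M_{k+1})`, where `M_k = ∑_j (λ_{ij}/β_{ij}) ν_k d̄_{ijk} / (λ_{ij} q_{ik} - ν_k d̄_{ijk})`
is the marginal value of `q_{ik}`, so optimality forces `M_k = M_{k+1}`. But condition (iii)
makes `M_k > 0`, and condition (iv), pushed through the increasing map `t ↦ t / (1 - t)`, makes
`M_k > M_{k+1}`. Zones with `ā_i = 0` are immediate: there (C1) forces the cumulative sums to
vanish.
-/

open Finset

noncomputable section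

/-- The exponential cone `K_exp ⊆ ℝ³`. -/
def Kexp : Set (ℝ × ℝ × ℝ) :=
  {v | 0 < v.1 ∧ 0 < v.2.1 ∧ v.2.2 ≤ v.2.1 * Real.log (v.1 / v.2.1)} ∪
  {v | 0 ≤ v.1 ∧ v.2.1 = 0 ∧ v.2.2 ≤ 0}

/-- All network primitives and parameter assumptions for the ride-hailing model
underlying problems FP1 and CP1. -/
structure Params (I : Type) [Fintype I] [DecidableEq I] where
  nonemptyI : Nonempty I
  /-- destination zones reachable with a passenger: `j ∈ Iout i ↔ (i,j) ∈ IJ` -/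
  Iout : I → Finset I
  /-- destination zones reachable empty: `j ∈ Itil i ↔ (i,j) ∈ ĨJ` -/
  Itil : I → Finset I
  IJ_nonempty : ∃ i j, j ∈ Iout i
  connected : ∀ i j : I, ∃ (n : ℕ) (c : ℕ → I),
    c 0 = i ∧ c n = j ∧ ∀ m, m < n → c (m + 1) ∈ Itil (c m)
  K : I → ℕ
  K_pos : ∀ i, 1 ≤ K i
  lam : I → I → ℝ
  mu : I → I → ℝ
  mutil : I → I → ℝ
  nu : ℕ → ℝ
  del : ℕ → ℝ
  sigma : I → ℝ
  om : ℝ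
  beta : I → I → ℝ
  alpha : I → I → ℕ → ℝ
  phi : I → I → ℕ → ℝ
  psi : I → I → ℝ
  lam_pos : ∀ i j, j ∈ Iout i → 0 < lam i j
  mu_pos : ∀ i j, j ∈ Iout i → 0 < mu i j
  mutil_pos : ∀ i j, j ∈ Itil i → 0 < mutil i j
  nu_pos : ∀ k, 1 ≤ k → k ≤ Finset.univ.sup K → 0 < nu k
  nu_strictAnti : ∀ k, 1 ≤ k → k + 1 ≤ Finset.univ.sup K → nu (k + 1) < nu k
  del_zero : del 0 = 0
  del_strictMono : ∀ k, k + 1 ≤ Finset.univ.sup K → del k < del (k + 1)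
  sigma_pos : ∀ i, 0 < sigma i
  om_pos : 0 < om
  beta_pos : ∀ i j, j ∈ Iout i → 0 < beta i j
  alpha_strictAnti : ∀ i j k, j ∈ Iout i → 1 ≤ k → k + 1 ≤ K i →
    alpha i j (k + 1) < alpha i j k
  phi_mono : ∀ i j k, j ∈ Iout i → 1 ≤ k → k + 1 ≤ K i →
    phi i j k ≤ phi i j (k + 1)

variable {I : Type} [Fintype I] [DecidableEq I]

/-- Sign restrictions and constraints (F4), (F5), (F6), shared by FP1 and CP1. -/
def SharedConstraints (P : Params I) (a : I → ℝ) (d : I → I → ℕ → ℝ)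
    (e f : I → I → ℝ) : Prop :=
  (∀ i, 0 ≤ a i) ∧
  (∀ i j, j ∈ P.Iout i → ∀ k ∈ Finset.Icc 1 (P.K i), 0 ≤ d i j k) ∧
  (∀ i j, j ∈ P.Itil i → 0 ≤ e i j) ∧
  (∀ i j, j ∈ P.Iout i → 0 ≤ f i j) ∧
  -- (F4)
  (∀ i j, j ∈ P.Iout i →
    ∑ k ∈ Finset.Icc 1 (P.K i), P.nu k * d i j k = P.mu i j * f i j) ∧
  -- (F5)
  (∀ i : I,
    (∑ j ∈ Finset.univ.filter (fun j => i ∈ P.Itil j), P.mutil j i * e j i) +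
    (∑ j ∈ Finset.univ.filter (fun j => i ∈ P.Iout j), P.mu j i * f j i) =
    (∑ j ∈ P.Itil i, P.mutil i j * e i j) +
    (∑ j ∈ P.Iout i, P.mu i j * f i j)) ∧
  -- (F6)
  ((∑ i, a i) + (∑ i, ∑ j ∈ P.Itil i, e i j) +
    (∑ i, ∑ j ∈ P.Iout i, (f i j + ∑ k ∈ Finset.Icc 1 (P.K i), d i j k)) = 1)

/-- Feasibility for problem FP1. -/
def FP1Feasible (P : Params I) (a : I → ℝ) (d : I → I → ℕ → ℝ)
    (e f : I → I → ℝ) (x p : I → I → ℕ → ℝ) (q : I → ℕ → ℝ) : Prop :=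
  SharedConstraints P a d e f ∧
  -- (F1)
  (∀ i, ∀ k ∈ Finset.Icc 1 (P.K i),
    ∑ k' ∈ Finset.Icc 1 k, q i k' =
      1 - Real.exp (-(P.om * P.del k ^ 2 * a i / P.sigma i))) ∧
  -- (F2)
  (∀ i j, j ∈ P.Iout i → ∀ k ∈ Finset.Icc 1 (P.K i),
    p i j k = Real.exp (P.alpha i j k - P.beta i j * x i j k) /
      (1 + Real.exp (P.alpha i j k - P.beta i j * x i j k))) ∧
  -- (F3)
  (∀ i j, j ∈ P.Iout i → ∀ k ∈ Finset.Icc 1 (P.K i),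
    P.lam i j * q i k * p i j k = P.nu k * d i j k)

/-- Feasibility for problem CP1. -/
def CP1Feasible (P : Params I) (a : I → ℝ) (d : I → I → ℕ → ℝ)
    (e f : I → I → ℝ) (u : I → I → ℕ → ℝ) (q : I → ℕ → ℝ) : Prop :=
  SharedConstraints P a d e f ∧
  (∀ i, ∀ k ∈ Finset.Icc 1 (P.K i), 0 ≤ q i k) ∧
  -- (C1)
  (∀ i, ∀ k ∈ Finset.Icc 1 (P.K i),
    ((1 - ∑ k' ∈ Finset.Icc 1 k, q i k', 1,
      -(P.om * P.del k ^ 2 * a i / P.sigma i)) : ℝ × ℝ × ℝ) ∈ Kexp) ∧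
  -- (C2)
  (∀ i j, j ∈ P.Iout i → ∀ k ∈ Finset.Icc 1 (P.K i),
    ((P.lam i j * q i k - P.nu k * d i j k, P.nu k * d i j k,
      P.beta i j * P.nu k * u i j k - P.alpha i j k * P.nu k * d i j k) :
      ℝ × ℝ × ℝ) ∈ Kexp)

/-- The FP1 objective Φ_FP1. -/
def objFP1 (P : Params I) (d : I → I → ℕ → ℝ) (e : I → I → ℝ)
    (x : I → I → ℕ → ℝ) : ℝ :=
  (∑ i, ∑ j ∈ P.Iout i, ∑ k ∈ Finset.Icc 1 (P.K i),
      P.nu k * d i j k * (x i j k - P.phi i j k)) -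
  ∑ i, ∑ j ∈ P.Itil i, P.psi i j * P.mutil i j * e i j

/-- The CP1 objective Φ_CP1. -/
def objCP1 (P : Params I) (d : I → I → ℕ → ℝ) (e : I → I → ℝ)
    (u : I → I → ℕ → ℝ) : ℝ :=
  (∑ i, ∑ j ∈ P.Iout i, ∑ k ∈ Finset.Icc 1 (P.K i),
      (P.nu k * u i j k - P.nu k * P.phi i j k * d i j k)) -
  ∑ i, ∑ j ∈ P.Itil i, P.psi i j * P.mutil i j * e i j

/-- Optimality for problem CP1. -/
def CP1Optimal (P : Params I) (a : I → ℝ) (d : I → I → ℕ → ℝ)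
    (e f : I → I → ℝ) (u : I → I → ℕ → ℝ) (q : I → ℕ → ℝ) : Prop :=
  CP1Feasible P a d e f u q ∧
  ∀ a' d' e' f' u' q', CP1Feasible P a' d' e' f' u' q' →
    objCP1 P d' e' u' ≤ objCP1 P d e u

/-- Optimality for problem FP1. -/
def FP1Optimal (P : Params I) (a : I → ℝ) (d : I → I → ℕ → ℝ)
    (e f : I → I → ℝ) (x p : I → I → ℕ → ℝ) (q : I → ℕ → ℝ) : Prop :=
  FP1Feasible P a d e f x p q ∧
  ∀ a' d' e' f' x' p' q', FP1Feasible P a' d' e' f' x' p' q' →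
    objFP1 P d' e' x' ≤ objFP1 P d e x

/-- Condition (i). -/
def CondI (P : Params I) (a : I → ℝ) (q : I → ℕ → ℝ) : Prop :=
  ∀ i, ∀ k ∈ Finset.Icc 1 (P.K i),
    ∑ k' ∈ Finset.Icc 1 k, q i k' =
      1 - Real.exp (-(P.om * P.del k ^ 2 * a i / P.sigma i))

/-- Condition (ii). -/
def CondII (P : Params I) (d u : I → I → ℕ → ℝ) (q : I → ℕ → ℝ) : Prop :=
  ∀ i j, j ∈ P.Iout i → ∀ k ∈ Finset.Icc 1 (P.K i),
    (d i j k = 0 ∧ u i j k = 0) ∨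
    (0 < d i j k ∧
      P.nu k * d i j k *
        Real.log (P.nu k * d i j k / (P.lam i j * q i k - P.nu k * d i j k)) =
      P.alpha i j k * P.nu k * d i j k - P.beta i j * P.nu k * u i j k)

/-- Condition (iii) at zone `i`. -/
def CondIII (P : Params I) (d : I → I → ℕ → ℝ) (q : I → ℕ → ℝ) (i : I) : Prop :=
  ∀ k ∈ Finset.Icc 1 (P.K i),
    0 < q i k ∧ 0 < ∑ j ∈ P.Iout i, d i j k

/-- Condition (iv) at zone `i`. -/
def CondIV (P : Params I) (d : I → I → ℕ → ℝ) (q : I → ℕ → ℝ) (i : I) : Prop :=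
  ∀ j ∈ P.Iout i,
    ((∀ k, 1 ≤ k → k + 1 ≤ P.K i →
        P.nu (k + 1) * d i j (k + 1) / (P.lam i j * q i (k + 1)) <
        P.nu k * d i j k / (P.lam i j * q i k)) ∧
      0 < P.nu (P.K i) * d i j (P.K i) / (P.lam i j * q i (P.K i))) ∨
    (∀ k ∈ Finset.Icc 1 (P.K i), d i j k = 0)

open Filter Topology

lemma mk_one_mem_Kexp_iff {A B : ℝ} :
    ((A, 1, B) : ℝ × ℝ × ℝ) ∈ Kexp ↔ Real.exp B ≤ A := by
  constructor
  · rintro (⟨hA, -, h⟩ | ⟨-, h, -⟩)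
    · simp only [div_one, one_mul] at h
      exact (Real.le_log_iff_exp_le hA).1 h
    · norm_num at h
  · intro h
    have hA : 0 < A := (Real.exp_pos B).trans_le h
    refine Or.inl ⟨hA, one_pos, ?_⟩
    simpa using (Real.le_log_iff_exp_le hA).2 h

lemma Kexp.fst_pos_of_snd_pos {v : ℝ × ℝ × ℝ} (hv : v ∈ Kexp) (h : 0 < v.2.1) : 0 < v.1 := by
  rcases hv with ⟨hx, -, -⟩ | ⟨-, hy, -⟩
  · exact hx
  · exact absurd hy h.ne'

lemma Kexp.shift_fst {x y z x' : ℝ} (hv : (x, y, z) ∈ Kexp) (hx' : 0 < x') :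
    (x', y, z + y * (Real.log x' - Real.log x)) ∈ Kexp := by
  rcases hv with ⟨hx, hy, hz⟩ | ⟨-, rfl, hz⟩
  · refine Or.inl ⟨hx', hy, ?_⟩
    simp only [Real.log_div hx.ne' hy.ne'] at hz
    simp only [Real.log_div hx'.ne' hy.ne']
    linear_combination hz
  · exact Or.inr ⟨hx'.le, rfl, by simpa using hz⟩

lemma div_sub_lt_div_sub_of_div_lt_div {a b x y : ℝ} (ha : 0 ≤ a) (hb : 0 ≤ b)
    (hax : a < x) (hby : b < y) (h : a / x < b / y) : a / (x - a) < b / (y - b) := by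
  rw [div_lt_div_iff₀ (ha.trans_lt hax) (hb.trans_lt hby)] at h
  rw [div_lt_div_iff₀ (sub_pos.2 hax) (sub_pos.2 hby)]
  linarith

lemma sum_Icc_single_sub_single {k : ℕ} (hk : 1 ≤ k) (m : ℕ) :
    ∑ k' ∈ Icc 1 m, (Pi.single k 1 - Pi.single (k + 1) 1 : ℕ → ℝ) k' = if m = k then 1 else 0 := by
  simp only [Pi.sub_apply, sum_sub_distrib, sum_pi_single', mem_Icc]
  split_ifs <;> (try norm_num) <;> omega

lemma sum_Icc_single_sub_single_mul {k K : ℕ} (hk : k ∈ Icc 1 K) (M : ℕ → ℝ) :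
    ∑ k' ∈ Icc 1 K, (Pi.single k 1 - Pi.single (k + 1) 1 : ℕ → ℝ) k' * M k' =
      M k - if k + 1 ≤ K then M (k + 1) else 0 := by
  simp only [Pi.sub_apply, sub_mul, sum_sub_distrib, Pi.single_apply, ite_mul, one_mul,
    zero_mul, sum_ite_eq', mem_Icc, le_add_iff_nonneg_left, zero_le, true_and]
  rw [if_pos (mem_Icc.1 hk)]

lemma eventually_sum_Icc_add_single_sub_single_le {s : Finset ℕ} {r b : ℕ → ℝ} {k : ℕ}
    (hk : 1 ≤ k) (hb : ∀ m ∈ s, ∑ k' ∈ Icc 1 m, r k' ≤ b m)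
    (hslack : ∑ k' ∈ Icc 1 k, r k' < b k) :
    ∀ᶠ ε in 𝓝 (0 : ℝ), ∀ m ∈ s,
      ∑ k' ∈ Icc 1 m, (r k' + ε * (Pi.single k 1 - Pi.single (k + 1) 1 : ℕ → ℝ) k') ≤ b m := by
  filter_upwards [eventually_lt_nhds (sub_pos.2 hslack)] with ε hε m hm
  rw [sum_add_distrib, ← mul_sum, sum_Icc_single_sub_single hk]
  split_ifs with hmk
  · subst hmk; linarith
  · simpa using hb m hm

lemma eventually_pos_add_mul {A : ℝ} (hA : 0 < A) (B : ℝ) :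
    ∀ᶠ ε in 𝓝 (0 : ℝ), 0 < A + ε * B :=
  ((continuous_const.add (continuous_id.mul continuous_const)).tendsto' 0 A (by simp)).eventually
    (eventually_gt_nhds hA)

lemma Params.nu_pos_of_mem_Icc (P : Params I) {i : I} {k : ℕ} (hk : k ∈ Icc 1 (P.K i)) :
    0 < P.nu k :=
  P.nu_pos k (mem_Icc.1 hk).1 ((mem_Icc.1 hk).2.trans (le_sup (mem_univ i)))

/-- The marginal value of `q i k` in CP1 once `u` is adjusted to stay on the boundary of (C2). -/
def marginalValue (P : Params I) (d : I → I → ℕ → ℝ) (q : I → ℕ → ℝ) (i : I) (k : ℕ) : ℝ :=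
  ∑ j ∈ P.Iout i,
    P.lam i j / P.beta i j * (P.nu k * d i j k / (P.lam i j * q i k - P.nu k * d i j k))

/-- Replacing the row `q i` by `r` lets `u i j k` grow by `(d i j k / β) log (x' / x)`, where
`x` and `x'` are the first coordinates of (C2) before and after the change. -/
def compensatedU (P : Params I) (d u : I → I → ℕ → ℝ) (q : I → ℕ → ℝ) (i : I) (r : ℕ → ℝ) :
    I → I → ℕ → ℝ :=
  Function.update u i fun j k => u i j k + d i j k / P.beta i j *
    (Real.log (P.lam i j * r k - P.nu k * d i j k) -
      Real.log (P.lam i j * q i k - P.nu k * d i j k))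

lemma objCP1_compensatedU (P : Params I) (d : I → I → ℕ → ℝ) (e : I → I → ℝ)
    (u : I → I → ℕ → ℝ) (q : I → ℕ → ℝ) (i : I) (r : ℕ → ℝ) :
    objCP1 P d e (compensatedU P d u q i r) = objCP1 P d e u +
      ∑ j ∈ P.Iout i, ∑ k ∈ Icc 1 (P.K i), P.nu k * d i j k / P.beta i j *
        (Real.log (P.lam i j * r k - P.nu k * d i j k) -
          Real.log (P.lam i j * q i k - P.nu k * d i j k)) := by
  unfold objCP1
  suffices h : ∑ i', (∑ j ∈ P.Iout i', ∑ k ∈ Icc 1 (P.K i'),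
      (P.nu k * compensatedU P d u q i r i' j k - P.nu k * P.phi i' j k * d i' j k) -
      ∑ j ∈ P.Iout i', ∑ k ∈ Icc 1 (P.K i'),
      (P.nu k * u i' j k - P.nu k * P.phi i' j k * d i' j k)) =
      ∑ j ∈ P.Iout i, ∑ k ∈ Icc 1 (P.K i), P.nu k * d i j k / P.beta i j *
        (Real.log (P.lam i j * r k - P.nu k * d i j k) -
          Real.log (P.lam i j * q i k - P.nu k * d i j k)) by
    rw [sum_sub_distrib] at h
    linarith
  rw [Fintype.sum_eq_single i fun i' hi => by simp [compensatedU, hi]]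
  simp only [compensatedU, Function.update_self, ← sum_sub_distrib]
  exact sum_congr rfl fun j _ => sum_congr rfl fun k _ => by ring

section Feasible

variable {P : Params I} {a : I → ℝ} {d : I → I → ℕ → ℝ} {e f : I → I → ℝ}
  {u : I → I → ℕ → ℝ} {q : I → ℕ → ℝ}

lemma CP1Feasible.sum_Icc_le (h : CP1Feasible P a d e f u q) {i : I} {k : ℕ}
    (hk : k ∈ Icc 1 (P.K i)) :
    ∑ k' ∈ Icc 1 k, q i k' ≤ 1 - Real.exp (-(P.om * P.del k ^ 2 * a i / P.sigma i)) := by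
  linarith [mk_one_mem_Kexp_iff.1 (h.2.2.1 i k hk)]

lemma CP1Feasible.sum_Icc_eq_of_eq_zero (h : CP1Feasible P a d e f u q) {i : I} {k : ℕ}
    (ha : a i = 0) (hk : k ∈ Icc 1 (P.K i)) :
    ∑ k' ∈ Icc 1 k, q i k' = 1 - Real.exp (-(P.om * P.del k ^ 2 * a i / P.sigma i)) := by
  have hle := h.sum_Icc_le hk
  simp only [ha, mul_zero, zero_div, neg_zero, Real.exp_zero, sub_self] at hle ⊢
  refine le_antisymm hle (sum_nonneg fun k' hk' => h.2.1 i k' ?_)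
  exact mem_Icc.2 ⟨(mem_Icc.1 hk').1, (mem_Icc.1 hk').2.trans (mem_Icc.1 hk).2⟩

lemma CP1Feasible.slack_pos (h : CP1Feasible P a d e f u q) {i j : I} {k : ℕ}
    (hj : j ∈ P.Iout i) (hk : k ∈ Icc 1 (P.K i)) (hq : 0 < q i k) :
    0 < P.lam i j * q i k - P.nu k * d i j k := by
  rcases (h.1.2.1 i j hj k hk).eq_or_lt with hd | hd
  · rw [← hd, mul_zero, sub_zero]
    exact mul_pos (P.lam_pos i j hj) hq
  · exact Kexp.fst_pos_of_snd_pos (h.2.2.2 i j hj k hk) (mul_pos (P.nu_pos_of_mem_Icc hk) hd)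

lemma CP1Feasible.update_row (h : CP1Feasible P a d e f u q) {i : I} {r : ℕ → ℝ}
    (hr : ∀ k ∈ Icc 1 (P.K i), 0 ≤ r k)
    (hC1 : ∀ k ∈ Icc 1 (P.K i),
      ∑ k' ∈ Icc 1 k, r k' ≤ 1 - Real.exp (-(P.om * P.del k ^ 2 * a i / P.sigma i)))
    (hslack : ∀ j ∈ P.Iout i, ∀ k ∈ Icc 1 (P.K i), 0 < P.lam i j * r k - P.nu k * d i j k) :
    CP1Feasible P a d e f (compensatedU P d u q i r) (Function.update q i r) := by
  obtain ⟨hsh, hq, hC1q, hC2⟩ := h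
  refine ⟨hsh, fun i' k hk => ?_, fun i' k hk => ?_, fun i' j hj k hk => ?_⟩ <;>
    rcases eq_or_ne i' i with rfl | hi
  · simpa using hr k hk
  · simpa [hi] using hq i' k hk
  · simpa [mk_one_mem_Kexp_iff, le_sub_comm] using hC1 k hk
  · simpa [hi] using hC1q i' k hk
  · have hβ := (P.beta_pos i' j hj).ne'
    convert Kexp.shift_fst (hC2 i' j hj k hk) (hslack j hj k hk) using 3
    · simp
    · simp only [compensatedU, Function.update_self]
      field_simp
      ring
  · simpa [compensatedU, hi] using hC2 i' j hj k hk

end Feasible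

lemma hasDerivAt_gain (P : Params I) (d : I → I → ℕ → ℝ) (q : I → ℕ → ℝ) {i : I}
    (hslack : ∀ j ∈ P.Iout i, ∀ k ∈ Icc 1 (P.K i), 0 < P.lam i j * q i k - P.nu k * d i j k)
    (w : ℕ → ℝ) :
    HasDerivAt (fun ε => ∑ j ∈ P.Iout i, ∑ k ∈ Icc 1 (P.K i), P.nu k * d i j k / P.beta i j *
        (Real.log (P.lam i j * (q i k + ε * w k) - P.nu k * d i j k) -
          Real.log (P.lam i j * q i k - P.nu k * d i j k)))
      (∑ k ∈ Icc 1 (P.K i), w k * marginalValue P d q i k) 0 := by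
  have h : HasDerivAt (fun ε => ∑ j ∈ P.Iout i, ∑ k ∈ Icc 1 (P.K i), P.nu k * d i j k /
        P.beta i j * (Real.log (P.lam i j * (q i k + ε * w k) - P.nu k * d i j k) -
          Real.log (P.lam i j * q i k - P.nu k * d i j k)))
      (∑ j ∈ P.Iout i, ∑ k ∈ Icc 1 (P.K i), P.nu k * d i j k / P.beta i j *
        (P.lam i j * w k / (P.lam i j * q i k - P.nu k * d i j k))) 0 := by
    refine HasDerivAt.fun_sum fun j hj => HasDerivAt.fun_sum fun k hk => ?_
    have hlin : HasDerivAt (fun ε => P.lam i j * (q i k + ε * w k) - P.nu k * d i j k)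
        (P.lam i j * w k) 0 := by
      simpa using ((((hasDerivAt_id (0 : ℝ)).mul_const (w k)).const_add (q i k)).const_mul
        (P.lam i j)).sub_const (P.nu k * d i j k)
    have hlog := hlin.log (by simpa using (hslack j hj k hk).ne')
    simpa using (hlog.sub_const (Real.log (P.lam i j * q i k - P.nu k * d i j k))).const_mul
      (P.nu k * d i j k / P.beta i j)
  convert h using 1
  simp only [marginalValue, mul_sum]
  rw [sum_comm]
  exact sum_congr rfl fun j _ => sum_congr rfl fun k _ => by ring

/-- Fermat's rule along a direction `w` for the row `q i`, when (C1) leaves room to move both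
ways. -/
theorem CP1Optimal.sum_mul_marginalValue_eq_zero {P : Params I} {a : I → ℝ}
    {d : I → I → ℕ → ℝ} {e f : I → I → ℝ} {u : I → I → ℕ → ℝ} {q : I → ℕ → ℝ}
    (hopt : CP1Optimal P a d e f u q) {i : I} (hq : ∀ k ∈ Icc 1 (P.K i), 0 < q i k)
    {w : ℕ → ℝ}
    (hC1 : ∀ᶠ ε in 𝓝 (0 : ℝ), ∀ k ∈ Icc 1 (P.K i), ∑ k' ∈ Icc 1 k, (q i k' + ε * w k') ≤
      1 - Real.exp (-(P.om * P.del k ^ 2 * a i / P.sigma i))) :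
    ∑ k ∈ Icc 1 (P.K i), w k * marginalValue P d q i k = 0 := by
  have hslack j (hj : j ∈ P.Iout i) k (hk : k ∈ Icc 1 (P.K i)) :=
    hopt.1.slack_pos hj hk (hq k hk)
  refine IsLocalMax.hasDerivAt_eq_zero ?_ (hasDerivAt_gain P d q hslack w)
  have hq_near : ∀ᶠ ε in 𝓝 (0 : ℝ), ∀ k ∈ Icc 1 (P.K i), 0 < q i k + ε * w k :=
    (eventually_all_finset _).2 fun k hk => eventually_pos_add_mul (hq k hk) (w k)
  have hslack_near : ∀ᶠ ε in 𝓝 (0 : ℝ), ∀ j ∈ P.Iout i, ∀ k ∈ Icc 1 (P.K i),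
      0 < P.lam i j * (q i k + ε * w k) - P.nu k * d i j k := by
    refine (eventually_all_finset _).2 fun j hj => (eventually_all_finset _).2 fun k hk => ?_
    filter_upwards [eventually_pos_add_mul (hslack j hj k hk) (P.lam i j * w k)] with ε hε
    linarith
  filter_upwards [hC1, hq_near, hslack_near] with ε hC1ε hqε hslackε
  have hfeas := hopt.1.update_row (fun k hk => (hqε k hk).le) hC1ε hslackε
  have hle := hopt.2 _ _ _ _ _ _ hfeas
  rw [objCP1_compensatedU] at hle
  simpa using hle

section Conditions

variable {P : Params I} {a : I → ℝ} {d : I → I → ℕ → ℝ} {e f : I → I → ℝ}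
  {u : I → I → ℕ → ℝ} {q : I → ℕ → ℝ} {i : I}

lemma marginalValue_pos (h : CP1Feasible P a d e f u q) (hIII : CondIII P d q i) {k : ℕ}
    (hk : k ∈ Icc 1 (P.K i)) : 0 < marginalValue P d q i k := by
  obtain ⟨j₀, hj₀, hd₀⟩ := exists_lt_of_sum_lt (by simpa using (hIII k hk).2 :
    ∑ j ∈ P.Iout i, (0 : ℝ) < ∑ j ∈ P.Iout i, d i j k)
  have hν := P.nu_pos_of_mem_Icc hk
  have hcoef j (hj : j ∈ P.Iout i) : 0 < P.lam i j / P.beta i j :=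
    div_pos (P.lam_pos i j hj) (P.beta_pos i j hj)
  refine sum_pos' (fun j hj => ?_) ⟨j₀, hj₀, ?_⟩
  · exact mul_nonneg (hcoef j hj).le (div_nonneg (mul_nonneg hν.le (h.1.2.1 i j hj k hk))
      (h.slack_pos hj hk (hIII k hk).1).le)
  · exact mul_pos (hcoef j₀ hj₀) (div_pos (mul_pos hν hd₀) (h.slack_pos hj₀ hk (hIII k hk).1))

lemma marginalValue_succ_lt (h : CP1Feasible P a d e f u q) (hIII : CondIII P d q i)
    (hIV : CondIV P d q i) {k : ℕ} (hk : 1 ≤ k) (hkK : k + 1 ≤ P.K i) :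
    marginalValue P d q i (k + 1) < marginalValue P d q i k := by
  have hkI : k ∈ Icc 1 (P.K i) := mem_Icc.2 ⟨hk, by omega⟩
  have hk1I : k + 1 ∈ Icc 1 (P.K i) := mem_Icc.2 ⟨by omega, hkK⟩
  have hcmp : ∀ j ∈ P.Iout i,
      P.lam i j / P.beta i j * (P.nu (k + 1) * d i j (k + 1) /
          (P.lam i j * q i (k + 1) - P.nu (k + 1) * d i j (k + 1))) <
        P.lam i j / P.beta i j * (P.nu k * d i j k / (P.lam i j * q i k - P.nu k * d i j k)) ∨
      d i j k = 0 ∧ d i j (k + 1) = 0 := by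
    intro j hj
    rcases hIV j hj with ⟨hchain, -⟩ | hzero
    · refine Or.inl (mul_lt_mul_of_pos_left ?_ (div_pos (P.lam_pos i j hj) (P.beta_pos i j hj)))
      exact div_sub_lt_div_sub_of_div_lt_div
        (mul_nonneg (P.nu_pos_of_mem_Icc hk1I).le (h.1.2.1 i j hj _ hk1I))
        (mul_nonneg (P.nu_pos_of_mem_Icc hkI).le (h.1.2.1 i j hj _ hkI))
        (sub_pos.1 (h.slack_pos hj hk1I (hIII _ hk1I).1))
        (sub_pos.1 (h.slack_pos hj hkI (hIII _ hkI).1)) (hchain k hk hkK)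
    · exact Or.inr ⟨hzero k hkI, hzero (k + 1) hk1I⟩
  obtain ⟨j₀, hj₀, hd₀⟩ := exists_lt_of_sum_lt (by simpa using (hIII k hkI).2 :
    ∑ j ∈ P.Iout i, (0 : ℝ) < ∑ j ∈ P.Iout i, d i j k)
  refine sum_lt_sum (fun j hj => ?_) ⟨j₀, hj₀, ?_⟩
  · rcases hcmp j hj with hlt | ⟨hd, hd'⟩
    · exact hlt.le
    · simp [hd, hd']
  · exact (hcmp j₀ hj₀).resolve_right fun hd => hd₀.ne' hd.1

end Conditions

/-- Lemma 4: at an optimal solution of CP1 at which Conditions (iii) and (iv) hold for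
every zone with positive idle-car mass, Condition (i) holds. -/
theorem CondIII_CondIV_imply_CondI {I : Type} [Fintype I] [DecidableEq I] (P : Params I)
    (a : I → ℝ) (d : I → I → ℕ → ℝ) (e f : I → I → ℝ)
    (u : I → I → ℕ → ℝ) (q : I → ℕ → ℝ)
    (hopt : CP1Optimal P a d e f u q)
    (h34 : ∀ i : I, 0 < a i → CondIII P d q i ∧ CondIV P d q i) :
    CondI P a q := by
  intro i k hk
  rcases (hopt.1.1.1 i).eq_or_lt with ha | ha
  · exact hopt.1.sum_Icc_eq_of_eq_zero ha.symm hk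
  obtain ⟨hIII, hIV⟩ := h34 i ha
  refine le_antisymm (hopt.1.sum_Icc_le hk) (not_lt.1 fun hslack => ?_)
  have hk1 : 1 ≤ k := (mem_Icc.1 hk).1
  -- shifting mass from level `k + 1` to the slack level `k` must be first-order neutral
  have hneutral := hopt.sum_mul_marginalValue_eq_zero (fun k' hk' => (hIII k' hk').1)
    (eventually_sum_Icc_add_single_sub_single_le hk1 (fun m hm => hopt.1.sum_Icc_le hm) hslack)
  rw [sum_Icc_single_sub_single_mul hk] at hneutral
  split_ifs at hneutral with hkK
  · exact (marginalValue_succ_lt hopt.1 hIII hIV hk1 hkK).ne (sub_eq_zero.1 hneutral).symm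
  · exact (marginalValue_pos hopt.1 hIII hk).ne' (by simpa using hneutral)

end
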